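/- Let (W,S) be a Coxeter system, J ⊆ S, and let u = s·u' and v = t·u' be simple chainlike elements of W^J with the same u' (s,t ∈ S their leftmost generators). Then u ∼ v if and only if s = t, where ∼ is defined by L(u,v) = L(u',v) = L(u,v'). -/

import Mathlib

open CoxeterSystem

namespace CoxPaper

variable {B : Type*} {M : CoxeterMatrix B} {W : Type*} [Group W]

/-- The Bruhat order on `W`, via the subword property. -/
def BruhatLE (cs : CoxeterSystem M W) (u w : W) : Prop :=
  ∃ ω : List B, cs.IsReduced ω ∧ cs.wordProd ω = w ∧
    ∃ υ : List B, υ.Sublist ω ∧ cs.wordProd υ = u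

/-- The strict Bruhat order. -/
def BruhatLT (cs : CoxeterSystem M W) (u w : W) : Prop :=
  BruhatLE cs u w ∧ u ≠ w

/-- The standard parabolic subgroup `W_J`. -/
def Parabolic (cs : CoxeterSystem M W) (J : Set B) : Subgroup W :=
  Subgroup.closure (cs.simple '' J)

/-- `w` is the minimal-length representative of its coset `w W_J`; the set of such
elements is `W^J`. -/
def MinRep (cs : CoxeterSystem M W) (J : Set B) (w : W) : Prop :=
  ∀ u : W, w⁻¹ * u ∈ Parabolic cs J → cs.length w ≤ cs.length u

/-- The covering relation `u ⋖ w` in the Bruhat order on `W^J`. -/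
def Covers (cs : CoxeterSystem M W) (J : Set B) (u w : W) : Prop :=
  MinRep cs J u ∧ MinRep cs J w ∧ BruhatLT cs u w ∧ cs.length w = cs.length u + 1

/-- `w ∈ W^J` is semi-chainlike if it covers exactly one element of `W^J`. -/
def SemiChainlike (cs : CoxeterSystem M W) (J : Set B) (w : W) : Prop :=
  MinRep cs J w ∧ ∃! u : W, Covers cs J u w

/-- `l` is a saturated chain of covering relations in `W^J` from the identity to `w`. -/
def IsChainTo (cs : CoxeterSystem M W) (J : Set B) (l : List W) (w : W) : Prop :=
  l.Chain' (Covers cs J) ∧ l.head? = some 1 ∧ l.getLast? = some w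

/-- `w` is chainlike: there is a unique saturated chain of coverings `e ⋖ ⋯ ⋖ w` in `W^J`. -/
def Chainlike (cs : CoxeterSystem M W) (J : Set B) (w : W) : Prop :=
  MinRep cs J w ∧ w ≠ 1 ∧ ∃! l : List W, IsChainTo cs J l w

/-- `m(s,t) ≥ 3`, where the entry `0` denotes `∞`. -/
def Big (M : CoxeterMatrix B) (s t : B) : Prop := M s t = 0 ∨ 3 ≤ M s t

/-- The word `l = [s_k, …, s_1, s_0]` is (the reduced expression of) a simple element
of `W^J`: the `sᵢ` are distinct, `s₀ ∈ S∖J`, `s₁, …, s_k ∈ J`, and `m(sᵢ,sⱼ) ≥ 3`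
if and only if `|i - j| = 1`. -/
def Simple (cs : CoxeterSystem M W) (J : Set B) (l : List B) : Prop :=
  l ≠ [] ∧ l.Nodup ∧
  (∀ i : Fin l.length, (i.val + 1 < l.length → l.get i ∈ J) ∧
    (i.val + 1 = l.length → l.get i ∉ J)) ∧
  (∀ i j : Fin l.length, Big M (l.get i) (l.get j) ↔
    (i.val + 1 = j.val ∨ j.val + 1 = i.val)) ∧
  MinRep cs J (cs.wordProd l)

/-- `L(u,v)`: the minimal length of an element of `W^J` above both `u` and `v`. -/
noncomputable def Lfun (cs : CoxeterSystem M W) (J : Set B) (u v : W) : ℕ :=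
  sInf {n | ∃ w : W, MinRep cs J w ∧ BruhatLE cs u w ∧ BruhatLE cs v w ∧ cs.length w = n}

/-- `X(u,v)`: the elements of `W^J` above both `u` and `v` of minimal length `L(u,v)`. -/
def Xset (cs : CoxeterSystem M W) (J : Set B) (u v : W) : Set W :=
  {w | MinRep cs J w ∧ BruhatLE cs u w ∧ BruhatLE cs v w ∧
    cs.length w = Lfun cs J u v}

/-- The sets `Mᵢ(u,v)`. -/
def Mset (cs : CoxeterSystem M W) (J : Set B) (u v : W) : ℕ → Set W
  | 0 => ∅
  | 1 => {u, v}
  | n + 2 => {w | MinRep cs J w ∧ ∀ z ∈ Mset cs J u v (n + 1), Covers cs J z w}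

/-- `M(u,v) = min { i ≥ 2 : |Mᵢ(u,v)| = 1 }`, with value `∞` if there is no such `i`. -/
noncomputable def Mval (cs : CoxeterSystem M W) (J : Set B) (u v : W) : ℕ∞ :=
  sInf {i : ℕ∞ | ∃ n : ℕ, i = n ∧ 2 ≤ n ∧ ∃ w : W, Mset cs J u v n = {w}}

/-- The Coxeter matrix entry `m(s,t)` as an extended natural number (`0` ↦ `∞`). -/
def entryE (M : CoxeterMatrix B) (s t : B) : ℕ∞ := if M s t = 0 then ⊤ else (M s t : ℕ∞)

/-! Concrete Coxeter matrices on `Fin n`. -/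

/-- Symmetrization of a function of natural numbers. -/
def symmEntry (f : ℕ → ℕ → ℕ) (a b : ℕ) : ℕ := if a = b then 1 else f (min a b) (max a b)

theorem symmEntry_comm (f : ℕ → ℕ → ℕ) (a b : ℕ) : symmEntry f a b = symmEntry f b a := by
  unfold symmEntry
  rcases eq_or_ne a b with rfl | h
  · simp
  · rw [if_neg h, if_neg h.symm, min_comm, max_comm]

/-- A Coxeter matrix on `Fin n` given by a function on pairs `a < b`. -/
def ofFun (n : ℕ) (f : ℕ → ℕ → ℕ) (hf : ∀ a b : ℕ, f a b ≠ 1) : CoxeterMatrix (Fin n) where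
  M := Matrix.of fun i j => symmEntry f i.val j.val
  isSymm := by
    ext i j
    simpa only [Matrix.transpose_apply, Matrix.of_apply] using symmEntry_comm f j.val i.val
  diagonal := by intro i; simp [symmEntry]
  off_diagonal := by
    intro i j hij
    have h : i.val ≠ j.val := fun h => hij (Fin.ext h)
    simp only [Matrix.of_apply, symmEntry, if_neg h]
    exact hf _ _

/-- The word `[k-1, k-2, …, 1, 0]` in `Fin n` (the descending product `s_k ⋯ s_2 s_1`,
with `sᵢ` corresponding to the index `i - 1`). -/
def descWord (n k : ℕ) : List (Fin n) :=
  (List.range k).reverse.filterMap fun i => if h : i < n then some ⟨i, h⟩ else none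

/-!
`u ∼ v` says `L(u, v) = L(u', v) = L(u, u')`, and `L(u, u') = ℓ(u)` because `u' ≤ u`. A common
upper bound of `u` and `v` in `W^J` of length `ℓ(u) = ℓ(v)` must equal both, so `u = v`, that is
`s·u' = t·u'`. Concluding `s = t` needs that distinct generators are distinct elements of `W`; this
is seen in the geometric representation, where `sᵢ` acts by `v ↦ v - 2 B(eᵢ, v) eᵢ` with
`B(eᵢ, eⱼ) = -cos (π / m(i,j))`, so that `sᵢ sⱼ` acts on `span(eᵢ, eⱼ)` as a rotation of order
`m(i,j)`.
-/

section GeometricRepresentation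

open Real Matrix

theorem sin_two_pi_div_ne_zero {m : ℕ} (hm : 3 ≤ m) : sin (2 * π / m) ≠ 0 := by
  have hm3 : (3 : ℝ) ≤ m := by exact_mod_cast hm
  refine (sin_pos_of_pos_of_lt_pi (by positivity) ?_).ne'
  rw [div_lt_iff₀ (by positivity)]
  nlinarith [pi_pos]

theorem sin_smul_pow_of_mul_self_eq {A : Type*} [Ring A] [Algebra ℝ A] {x : A} {φ : ℝ}
    (hx : x * x = (2 * cos φ) • x - 1) (n : ℕ) :
    sin φ • x ^ n = sin (n * φ) • x - sin ((n - 1) * φ) • 1 := by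
  induction n with
  | zero => simp [neg_mul, sin_neg]
  | succ n ih =>
    have hsin : sin ((n + 1) * φ) = 2 * cos φ * sin (n * φ) - sin ((n - 1) * φ) := by
      rw [add_mul, sub_mul, one_mul, sin_add, sin_sub]; ring
    rw [pow_succ, ← smul_mul_assoc, ih, sub_mul, smul_mul_assoc, hx, smul_mul_assoc, one_mul]
    push_cast
    rw [add_sub_cancel_right, hsin]
    module

theorem pow_eq_one_of_mul_self_eq {A : Type*} [Ring A] [Algebra ℝ A] {x : A} {m : ℕ}
    (hm : 3 ≤ m) (hx : x * x = (2 * cos (2 * π / m)) • x - 1) : x ^ m = 1 := by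
  have h := sin_smul_pow_of_mul_self_eq hx m
  rw [show (m : ℝ) * (2 * π / m) = 2 * π by field_simp, sin_two_pi,
    show ((m : ℝ) - 1) * (2 * π / m) = 2 * π - 2 * π / m by field_simp, sin_two_pi_sub,
    zero_smul, zero_sub, neg_smul, neg_neg] at h
  exact smul_right_injective A (sin_two_pi_div_ne_zero hm) h

theorem geom_sum_eq_zero_of_mul_self_eq {A : Type*} [Ring A] [Algebra ℝ A] {x : A} {m : ℕ}
    (hm : 3 ≤ m) (hx : x * x = (2 * cos (2 * π / m)) • x - 1) :
    ∑ k ∈ Finset.range m, x ^ k = 0 := by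
  set c := cos (2 * π / m)
  have hc : 2 * c - 2 ≠ 0 := by
    intro h
    exact sin_two_pi_div_ne_zero hm (sin_eq_zero_iff_cos_eq.mpr (Or.inl (by linarith)))
  have hinv : (x - 1) * ((2 * c - 2)⁻¹ • (x + (1 - 2 * c) • 1)) = 1 := by
    rw [mul_smul_comm, mul_add, sub_mul, sub_mul, hx, mul_smul_comm, mul_one, one_mul, one_mul]
    rw [show (2 * c) • x - 1 - x + ((1 - 2 * c) • x - (1 - 2 * c) • 1) = (2 * c - 2) • (1 : A) by
      module, smul_smul, inv_mul_cancel₀ hc, one_smul]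
  calc ∑ k ∈ Finset.range m, x ^ k
      = (∑ k ∈ Finset.range m, x ^ k) * (x - 1) * ((2 * c - 2)⁻¹ • (x + (1 - 2 * c) • 1)) := by
        rw [mul_assoc, hinv, mul_one]
    _ = 0 := by rw [geom_sum_mul, pow_eq_one_of_mul_self_eq hm hx, sub_self, zero_mul]

noncomputable def dihedralMatrix (c : ℝ) : Matrix (Fin 2) (Fin 2) ℝ :=
  !![4 * c ^ 2 - 1, -2 * c; 2 * c, -1]

theorem dihedralMatrix_mul_self (θ : ℝ) :
    dihedralMatrix (cos θ) * dihedralMatrix (cos θ) =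
      (2 * cos (2 * θ)) • dihedralMatrix (cos θ) - 1 := by
  rw [cos_two_mul]
  ext i j
  fin_cases i <;> fin_cases j <;> simp [dihedralMatrix, Matrix.mul_apply] <;> ring

theorem dihedralMatrix_mulVec (c : ℝ) (x : Fin 2 → ℝ) :
    dihedralMatrix c *ᵥ x = ![(4 * c ^ 2 - 1) * x 0 - 2 * c * x 1, 2 * c * x 0 - x 1] := by
  ext k
  fin_cases k <;> simp [dihedralMatrix, Matrix.mulVec, dotProduct] <;> ring

noncomputable def geomPairing (M : CoxeterMatrix B) (i : B) : (B →₀ ℝ) →ₗ[ℝ] ℝ :=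
  Finsupp.linearCombination ℝ fun k => -cos (π / M i k)

noncomputable def geomReflection (M : CoxeterMatrix B) (i : B) : Module.End ℝ (B →₀ ℝ) :=
  LinearMap.id - (2 : ℝ) • (geomPairing M i).smulRight (Finsupp.single i 1)

theorem geomPairing_single (M : CoxeterMatrix B) (i k : B) (a : ℝ) :
    geomPairing M i (Finsupp.single k a) = -(a * cos (π / M i k)) := by
  simp [geomPairing]

theorem geomPairing_single_self (M : CoxeterMatrix B) (i : B) (a : ℝ) :
    geomPairing M i (Finsupp.single i a) = a := by
  simp [geomPairing_single]

theorem geomReflection_apply (M : CoxeterMatrix B) (i : B) (v : B →₀ ℝ) :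
    geomReflection M i v = v - (2 * geomPairing M i v) • Finsupp.single i 1 := by
  simp [geomReflection, mul_smul]

theorem geomReflection_mul_self (M : CoxeterMatrix B) (i : B) :
    geomReflection M i * geomReflection M i = 1 := by
  refine LinearMap.ext fun v => ?_
  rw [Module.End.mul_apply, geomReflection_apply, geomReflection_apply, map_sub, map_smul,
    geomPairing_single_self, Module.End.one_apply, smul_eq_mul, mul_one]
  module

noncomputable def planeEmbedding (i j : B) : (Fin 2 → ℝ) →ₗ[ℝ] B →₀ ℝ :=
  Fintype.linearCombination ℝ ![Finsupp.single i 1, Finsupp.single j 1]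

theorem planeEmbedding_apply (i j : B) (x : Fin 2 → ℝ) :
    planeEmbedding i j x = x 0 • Finsupp.single i 1 + x 1 • Finsupp.single j 1 := by
  simp [planeEmbedding, Fintype.linearCombination_apply]

theorem geomReflection_mul_apply_planeEmbedding (M : CoxeterMatrix B) (i j : B) (x : Fin 2 → ℝ) :
    (geomReflection M i * geomReflection M j) (planeEmbedding i j x) =
      planeEmbedding i j (dihedralMatrix (cos (π / M i j)) *ᵥ x) := by
  have hji : cos (π / M j i) = cos (π / M i j) := by rw [M.symmetric]
  simp only [dihedralMatrix_mulVec, planeEmbedding_apply, Module.End.mul_apply,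
    geomReflection_apply, map_add, map_sub, map_smul, geomPairing_single, hji,
    Matrix.cons_val_zero, Matrix.cons_val_one]
  simp only [CoxeterMatrix.diagonal, Nat.cast_one, div_one, cos_pi]
  module

theorem geomReflection_mul_apply_sub_self (M : CoxeterMatrix B) (i j : B) (v : B →₀ ℝ) :
    (geomReflection M i * geomReflection M j) v - v =
      planeEmbedding i j ![-2 * geomPairing M i v - 4 * cos (π / M i j) * geomPairing M j v,
        -2 * geomPairing M j v] := by
  simp only [planeEmbedding_apply, Module.End.mul_apply, geomReflection_apply, map_sub,
    map_smul, geomPairing_single, Matrix.cons_val_zero, Matrix.cons_val_one]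
  module

theorem dihedralMatrix_geom_sum {m : ℕ} (hm : 2 ≤ m) :
    ∑ k ∈ Finset.range m, dihedralMatrix (cos (π / m)) ^ k = 0 := by
  obtain rfl | hm3 := hm.eq_or_lt
  · ext i j
    fin_cases i <;> fin_cases j <;> simp [dihedralMatrix, Finset.sum_range_succ]
  · refine geom_sum_eq_zero_of_mul_self_eq hm3 ?_
    rw [dihedralMatrix_mul_self, mul_div_assoc']

theorem geomReflection_mul_pow (M : CoxeterMatrix B) (i j : B) (hm : 2 ≤ M i j) :
    (geomReflection M i * geomReflection M j) ^ M i j = 1 := by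
  set T := geomReflection M i * geomReflection M j
  have hpow (k : ℕ) (x : Fin 2 → ℝ) : (T ^ k) (planeEmbedding i j x) =
      planeEmbedding i j (dihedralMatrix (cos (π / M i j)) ^ k *ᵥ x) := by
    induction k with
    | zero => simp
    | succ k ih =>
      rw [pow_succ', Module.End.mul_apply, ih, geomReflection_mul_apply_planeEmbedding,
        Matrix.mulVec_mulVec, pow_succ']
  have hsum (x : Fin 2 → ℝ) :
      (∑ k ∈ Finset.range (M i j), T ^ k) (planeEmbedding i j x) = 0 := by
    simp only [LinearMap.sum_apply, hpow, ← map_sum, ← Matrix.sum_mulVec,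
      dihedralMatrix_geom_sum hm, Matrix.zero_mulVec, map_zero]
  -- `T ^ m - 1 = (∑ k < m, T ^ k) (T - 1)`, and `T - 1` maps into the plane of `eᵢ, eⱼ`.
  refine LinearMap.ext fun v => sub_eq_zero.mp ?_
  have h := congrArg (· v) (geom_sum_mul T (M i j))
  simp only [Module.End.mul_apply, LinearMap.sub_apply, Module.End.one_apply] at h
  rw [Module.End.one_apply, ← h, geomReflection_mul_apply_sub_self, hsum]

theorem isLiftable_geomReflection (M : CoxeterMatrix B) : M.IsLiftable (geomReflection M) := by
  intro i j
  obtain h | h | h : M i j = 0 ∨ M i j = 1 ∨ 2 ≤ M i j := by omega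
  · rw [h, pow_zero]
  · obtain rfl : i = j := by_contra fun hij => M.off_diagonal i j hij h
    rw [h, pow_one, geomReflection_mul_self]
  · exact geomReflection_mul_pow M i j h

theorem _root_.CoxeterSystem.simple_injective (cs : CoxeterSystem M W) :
    Function.Injective cs.simple := by
  intro i j h
  by_contra hij
  have h' := congrArg (cs.lift ⟨_, isLiftable_geomReflection M⟩) h
  rw [lift_apply_simple, lift_apply_simple] at h'
  have hcoord := congrArg (fun f : Module.End ℝ (B →₀ ℝ) => f (Finsupp.single i 1) i) h'
  simp [geomReflection_apply, geomPairing_single_self, Ne.symm hij] at hcoord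

end GeometricRepresentation

theorem bruhatLE_refl (cs : CoxeterSystem M W) (w : W) : BruhatLE cs w w := by
  obtain ⟨ω, hred, rfl⟩ := cs.exists_isReduced w
  exact ⟨ω, hred, rfl, ω, .refl ω, rfl⟩

theorem BruhatLE.length_le {cs : CoxeterSystem M W} {u w : W} (h : BruhatLE cs u w) :
    cs.length u ≤ cs.length w := by
  obtain ⟨ω, hred, rfl, υ, hsub, rfl⟩ := h
  calc cs.length (cs.wordProd υ) ≤ υ.length := cs.length_wordProd_le υ
    _ ≤ ω.length := hsub.length_le
    _ = cs.length (cs.wordProd ω) := hred.symm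

theorem BruhatLE.eq_of_length_le {cs : CoxeterSystem M W} {u w : W} (h : BruhatLE cs u w)
    (hl : cs.length w ≤ cs.length u) : u = w := by
  obtain ⟨ω, hred, rfl, υ, hsub, rfl⟩ := h
  have hυ : cs.length (cs.wordProd υ) ≤ υ.length := cs.length_wordProd_le υ
  have hω : ω.length = cs.length (cs.wordProd ω) := hred.symm
  rw [hsub.eq_of_length (le_antisymm hsub.length_le (by omega))]

theorem Lfun_comm (cs : CoxeterSystem M W) (J : Set B) (u v : W) :
    Lfun cs J u v = Lfun cs J v u := by
  simp only [Lfun, and_left_comm]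

theorem Lfun_eq_length_of_bruhatLE {cs : CoxeterSystem M W} {J : Set B} {u w : W}
    (huw : BruhatLE cs u w) (hw : MinRep cs J w) : Lfun cs J u w = cs.length w :=
  le_antisymm (Nat.sInf_le ⟨w, hw, huw, bruhatLE_refl cs w, rfl⟩)
    (le_csInf ⟨_, w, hw, huw, bruhatLE_refl cs w, rfl⟩ fun _ ⟨_, _, _, hwx, hx⟩ =>
      hx ▸ hwx.length_le)

/-- As `sInf ∅ = 0`, `Lfun` is `0` when `u` and `v` have no common upper bound in `W^J`. -/
theorem Xset_nonempty_of_Lfun_ne_zero {cs : CoxeterSystem M W} {J : Set B} {u v : W}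
    (h : Lfun cs J u v ≠ 0) : (Xset cs J u v).Nonempty := by
  have hne : {n | ∃ w : W, MinRep cs J w ∧ BruhatLE cs u w ∧ BruhatLE cs v w ∧
      cs.length w = n}.Nonempty :=
    Set.nonempty_iff_ne_empty.mpr fun he => h (by rw [Lfun, he, Nat.sInf_empty])
  obtain ⟨w, hw, huw, hvw, hl⟩ := Nat.sInf_mem hne
  exact ⟨w, hw, huw, hvw, hl⟩

theorem eq_of_length_eq_Lfun {cs : CoxeterSystem M W} {J : Set B} {u v : W}
    (hu : cs.length u = Lfun cs J u v) (hv : cs.length v = Lfun cs J u v) : u = v := by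
  by_cases h0 : Lfun cs J u v = 0
  · rw [h0, cs.length_eq_zero_iff] at hu hv
    rw [hu, hv]
  · obtain ⟨w, -, huw, hvw, hw⟩ := Xset_nonempty_of_Lfun_ne_zero h0
    rw [huw.eq_of_length_le (by omega), hvw.eq_of_length_le (by omega)]

theorem statement_10_general (cs : CoxeterSystem M W) (J : Set B) (u v u' : W) (s t : B)
    (hcu : Covers cs J u' u) (hcv : Covers cs J u' v)
    (hus : u = cs.simple s * u') (hvt : v = cs.simple t * u') :
    (Lfun cs J u v = Lfun cs J u' v ∧ Lfun cs J u v = Lfun cs J u u') ↔ s = t := by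
  obtain ⟨-, huJ, ⟨hu'u, -⟩, hlu⟩ := hcu
  have hLuu' : Lfun cs J u u' = cs.length u := by
    rw [Lfun_comm, Lfun_eq_length_of_bruhatLE hu'u huJ]
  constructor
  · rintro ⟨-, hL⟩
    have huv : u = v :=
      eq_of_length_eq_Lfun (hL.trans hLuu').symm (by rw [hL, hLuu', hcv.2.2.2, hlu])
    rw [hus, hvt] at huv
    exact cs.simple_injective (mul_right_cancel huv)
  · rintro rfl
    obtain rfl : u = v := hus.trans hvt.symm
    rw [hLuu', Lfun_eq_length_of_bruhatLE hu'u huJ,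
      Lfun_eq_length_of_bruhatLE (bruhatLE_refl cs u) huJ]
    exact ⟨rfl, rfl⟩

/-- if `u = s·u'` and `v = t·u'` are simple chainlike elements of `W^J`
with the same covered element `u'`, then `u ∼ v` if and only if `s = t`. -/
theorem statement_10 (cs : CoxeterSystem M W) (J : Set B) (u v u' : W) (s t : B)
    (lu lv : List B)
    (hlu : Simple cs J lu) (hπu : cs.wordProd lu = u)
    (hlv : Simple cs J lv) (hπv : cs.wordProd lv = v)
    (hu : Chainlike cs J u) (hv : Chainlike cs J v)
    (hcu : Covers cs J u' u) (hcv : Covers cs J u' v)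
    (hus : u = cs.simple s * u') (hvt : v = cs.simple t * u') :
    (Lfun cs J u v = Lfun cs J u' v ∧ Lfun cs J u v = Lfun cs J u u') ↔ s = t :=
  statement_10_general cs J u v u' s t hcu hcv hus hvt

end CoxPaper
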